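/- arXiv:2512.04614 — 7 statements merged into one kernel-verified Lean document; each statement's English description precedes it below -/
import Mathlib

section
/- For any vector x in R_{≥0}^n and any real ℓ in [0,n], the top-ℓ norm of x equals the minimum over t ≥ 0 of (∑_{j=1}^n (x_j - t)^+ + ℓt), where the top-ℓ norm is the maximum of α·x over α ∈ [0,1]^n with |α|_1 = ℓ. Moreover, when ℓ is a positive integer, the minimum is achieved when t is the ℓ-th largest coordinate of x. -/
/-!
Weak LP duality: for `α ∈ [0,1]^n` with `∑ α = ℓ` and any `t`, each term satisfies
`α_j x_j ≤ (x_j - t)^+ + α_j t`, so `α · x ≤ ∑ (x_j - t)^+ + ℓ t`. Equality holds termwise as soon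
as `α_j = 1` where `x_j > t` and `α_j = 0` where `x_j < t` (complementary slackness). Sorting `x`
decreasingly and taking `k ≤ ℓ ≤ k + 1`, the greedy weights (`1` on the `k` largest coordinates,
`ℓ - k` on the next one) together with `t` the `(k+1)`-st largest coordinate satisfy this, so the
supremum and the infimum share a value.
-/

open Finset

/-- The top-ℓ norm of `x ∈ ℝ_{≥0}^n` for real `ℓ ∈ [0,n]`:
the maximum of `∑ α_j x_j` over `α ∈ [0,1]^n` with `∑ α_j = ℓ`. -/
noncomputable def topNorm (n : ℕ) (x : Fin n → ℝ) (ℓ : ℝ) : ℝ :=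
  sSup {s : ℝ | ∃ α : Fin n → ℝ, (∀ j, 0 ≤ α j ∧ α j ≤ 1) ∧ (∑ j, α j) = ℓ ∧
    s = ∑ j, α j * x j}

section Duality

variable {ι : Type*} [Fintype ι]

def primalValues (x : ι → ℝ) (ℓ : ℝ) : Set ℝ :=
  {s | ∃ α : ι → ℝ, (∀ j, 0 ≤ α j ∧ α j ≤ 1) ∧ (∑ j, α j) = ℓ ∧ s = ∑ j, α j * x j}

def dualValues (x : ι → ℝ) (ℓ : ℝ) : Set ℝ :=
  {v | ∃ t : ℝ, 0 ≤ t ∧ v = (∑ j, max (x j - t) 0) + ℓ * t}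

lemma mul_le_max_sub_zero_add_mul {a y : ℝ} (ha0 : 0 ≤ a) (ha1 : a ≤ 1) (t : ℝ) :
    a * y ≤ max (y - t) 0 + a * t := by
  rcases le_total y t with h | h
  · nlinarith [le_max_right (y - t) 0]
  · nlinarith [le_max_left (y - t) 0]

lemma sum_mul_le_sum_max_sub_zero_add {x α : ι → ℝ} (hα : ∀ j, 0 ≤ α j ∧ α j ≤ 1) (t : ℝ) :
    ∑ j, α j * x j ≤ (∑ j, max (x j - t) 0) + (∑ j, α j) * t := by
  rw [sum_mul, ← sum_add_distrib]
  exact sum_le_sum fun j _ => mul_le_max_sub_zero_add_mul (hα j).1 (hα j).2 t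

lemma sum_mul_eq_sum_max_sub_zero_add {x α : ι → ℝ} {t : ℝ}
    (hα_one : ∀ j, t < x j → α j = 1) (hα_zero : ∀ j, x j < t → α j = 0) :
    ∑ j, α j * x j = (∑ j, max (x j - t) 0) + (∑ j, α j) * t := by
  rw [sum_mul, ← sum_add_distrib]
  refine sum_congr rfl fun j _ => ?_
  rcases lt_trichotomy (x j) t with h | h | h
  · simp [hα_zero j h, h.le]
  · simp [h]
  · simp [hα_one j h, h.le]

lemma le_of_mem_primalValues_of_mem_dualValues {x : ι → ℝ} {ℓ s v : ℝ}
    (hs : s ∈ primalValues x ℓ) (hv : v ∈ dualValues x ℓ) : s ≤ v := by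
  obtain ⟨α, hα, hsum, rfl⟩ := hs
  obtain ⟨t, -, rfl⟩ := hv
  simpa [hsum] using sum_mul_le_sum_max_sub_zero_add (x := x) hα t

lemma csSup_primalValues_eq_and_csInf_dualValues_eq {x : ι → ℝ} {ℓ c : ℝ}
    (hcS : c ∈ primalValues x ℓ) (hcT : c ∈ dualValues x ℓ) :
    sSup (primalValues x ℓ) = c ∧ sInf (dualValues x ℓ) = c :=
  ⟨IsGreatest.csSup_eq ⟨hcS, fun _ hs => le_of_mem_primalValues_of_mem_dualValues hs hcT⟩,
    IsLeast.csInf_eq ⟨hcT, fun _ hv => le_of_mem_primalValues_of_mem_dualValues hcS hv⟩⟩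

end Duality

section Greedy

variable {n : ℕ}

def greedyWeights (k : Fin n) (ℓ : ℝ) (i : Fin n) : ℝ :=
  if i < k then 1 else if i = k then ℓ - k else 0

lemma greedyWeights_mem_Icc {k : Fin n} {ℓ : ℝ} (h₁ : (k : ℝ) ≤ ℓ) (h₂ : ℓ ≤ k + 1) (i : Fin n) :
    0 ≤ greedyWeights k ℓ i ∧ greedyWeights k ℓ i ≤ 1 := by
  unfold greedyWeights
  split_ifs <;> constructor <;> linarith

lemma sum_greedyWeights (k : Fin n) (ℓ : ℝ) : ∑ i, greedyWeights k ℓ i = ℓ := by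
  unfold greedyWeights
  rw [sum_ite, sum_ite_eq']
  simp [filter_gt_eq_Iio]

lemma greedyWeights_eq_one {y : Fin n → ℝ} (hy : Antitone y) {k i : Fin n} (ℓ : ℝ)
    (h : y k < y i) : greedyWeights k ℓ i = 1 :=
  if_pos (lt_of_not_ge fun hki => h.not_ge (hy hki))

lemma greedyWeights_eq_zero {y : Fin n → ℝ} (hy : Antitone y) {k i : Fin n} (ℓ : ℝ)
    (h : y i < y k) : greedyWeights k ℓ i = 0 := by
  have hki : k < i := lt_of_not_ge fun hik => h.not_ge (hy hik)
  simp [greedyWeights, hki.not_gt, hki.ne']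

lemma sum_max_sub_zero_add_mem_primalValues {x : Fin n → ℝ} {ℓ : ℝ} (σ : Equiv.Perm (Fin n))
    (hσ : Antitone (x ∘ σ)) {k : Fin n} (h₁ : (k : ℝ) ≤ ℓ) (h₂ : ℓ ≤ k + 1) :
    (∑ j, max (x j - x (σ k)) 0) + ℓ * x (σ k) ∈ primalValues x ℓ := by
  set α : Fin n → ℝ := fun j => greedyWeights k ℓ (σ.symm j)
  have hsum : ∑ j, α j = ℓ := (Equiv.sum_comp σ.symm _).trans (sum_greedyWeights k ℓ)
  refine ⟨α, fun j => greedyWeights_mem_Icc h₁ h₂ _, hsum, ?_⟩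
  rw [sum_mul_eq_sum_max_sub_zero_add (t := x (σ k)), hsum]
  · exact fun j hj => greedyWeights_eq_one hσ ℓ (by simpa using hj)
  · exact fun j hj => greedyWeights_eq_zero hσ ℓ (by simpa using hj)

lemma exists_perm_antitone_comp (x : Fin n → ℝ) : ∃ σ : Equiv.Perm (Fin n), Antitone (x ∘ σ) :=
  ⟨Tuple.sort (OrderDual.toDual ∘ x), fun _ _ h => Tuple.monotone_sort (OrderDual.toDual ∘ x) h⟩

lemma exists_fin_le_le_add_one (hn : 0 < n) {ℓ : ℝ} (hℓ0 : 0 ≤ ℓ) (hℓn : ℓ ≤ n) :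
    ∃ k : Fin n, (k : ℝ) ≤ ℓ ∧ ℓ ≤ k + 1 := by
  rcases hℓn.lt_or_eq with hlt | heq
  · exact ⟨⟨⌊ℓ⌋₊, (Nat.floor_lt hℓ0).2 hlt⟩, Nat.floor_le hℓ0, (Nat.lt_floor_add_one ℓ).le⟩
  · subst heq
    refine ⟨⟨n - 1, by omega⟩, ?_, ?_⟩ <;> simp [Nat.cast_sub hn]

end Greedy

lemma exists_mem_primalValues_and_mem_dualValues {n : ℕ} {x : Fin n → ℝ} (hx : ∀ j, 0 ≤ x j)
    {ℓ : ℝ} (hℓ0 : 0 ≤ ℓ) (hℓn : ℓ ≤ n) :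
    ∃ c, c ∈ primalValues x ℓ ∧ c ∈ dualValues x ℓ := by
  rcases Nat.eq_zero_or_pos n with rfl | hn
  · obtain rfl : ℓ = 0 := le_antisymm (by simpa using hℓn) hℓ0
    exact ⟨0, ⟨0, by simp, by simp, by simp⟩, 0, le_rfl, by simp⟩
  · obtain ⟨σ, hσ⟩ := exists_perm_antitone_comp x
    obtain ⟨k, h₁, h₂⟩ := exists_fin_le_le_add_one hn hℓ0 hℓn
    exact ⟨_, sum_max_sub_zero_add_mem_primalValues σ hσ h₁ h₂, x (σ k), hx _, rfl⟩

/-- The top-ℓ norm equals `min_{t ≥ 0} (∑_j (x_j - t)^+ + ℓ t)`; moreover, when `ℓ` is a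
positive integer, the minimum is attained at `t` the ℓ-th largest coordinate of `x`. -/
theorem stmt0 (n : ℕ) (x : Fin n → ℝ) (hx : ∀ j, 0 ≤ x j) (ℓ : ℝ)
    (hℓ0 : 0 ≤ ℓ) (hℓn : ℓ ≤ n) :
    topNorm n x ℓ =
      sInf {v : ℝ | ∃ t : ℝ, 0 ≤ t ∧ v = (∑ j, max (x j - t) 0) + ℓ * t} ∧
    ∀ (σ : Equiv.Perm (Fin n)) (m : Fin n),
      (∀ i j : Fin n, i ≤ j → x (σ j) ≤ x (σ i)) → ((m : ℝ) + 1 = ℓ) →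
      (∑ j, max (x j - x (σ m)) 0) + ℓ * x (σ m) = topNorm n x ℓ := by
  refine ⟨?_, fun σ m hσ hm => ?_⟩
  · obtain ⟨c, hcS, hcT⟩ := exists_mem_primalValues_and_mem_dualValues hx hℓ0 hℓn
    obtain ⟨hsup, hinf⟩ := csSup_primalValues_eq_and_csInf_dualValues_eq hcS hcT
    exact hsup.trans hinf.symm
  · have hcS := sum_max_sub_zero_add_mem_primalValues σ hσ (k := m) (by linarith) hm.ge
    exact (csSup_primalValues_eq_and_csInf_dualValues_eq hcS ⟨x (σ m), hx _, rfl⟩).1.symm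
end

section
/- Let δ ∈ S_n and δ = ∑_{h=0}^H θ^h with θ^0,...,θ^H ≥ 0, and let γ ≥ 1. For every h ∈ [H], let b_h ∈ Z_{≥0} satisfy b_h ≤ γ · (∑_a a·θ^h_a) / (∑_a θ^h_a). Define δ' = θ^0 + ∑_{h=1}^H (∑_a θ^h_a)·e_{b_h}, where e_b is the indicator vector of b ∈ Z_{≥0}. Then δ' ⪯_γ δ. -/
/-- Membership in `S_n`: a finitely supported non-negative vector indexed by `ℕ`
whose coordinates sum to `n`. -/
def memS (n : ℕ) (δ : ℕ → ℝ) : Prop :=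
  (∀ a, 0 ≤ δ a) ∧ (Function.support δ).Finite ∧ (∑' a, δ a) = n

/-- `topBar δ ℓ` is the optimal value of the LP:
maximize `∑_a a·α_a` subject to `0 ≤ α ≤ δ` and `∑_a α_a = ℓ`. -/
noncomputable def topBar (δ : ℕ → ℝ) (ℓ : ℝ) : ℝ :=
  sSup {s : ℝ | ∃ α : ℕ → ℝ, (∀ a, 0 ≤ α a ∧ α a ≤ δ a) ∧ (∑' a, α a) = ℓ ∧
    s = ∑' a : ℕ, (a : ℝ) * α a}

/-- `δ' ⪯_γ δ`: `topBar δ' ℓ ≤ γ · topBar δ ℓ` for every real `ℓ ∈ [0,n]`. -/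
def Dominates (n : ℕ) (γ : ℝ) (δ' δ : ℕ → ℝ) : Prop :=
  ∀ ℓ : ℝ, 0 ≤ ℓ → ℓ ≤ n → topBar δ' ℓ ≤ γ * topBar δ ℓ

lemma bdd_above_topBarSet (δ : ℕ → ℝ) (hfin : (Function.support δ).Finite) (ℓ : ℝ) :
    BddAbove {s : ℝ | ∃ α : ℕ → ℝ, (∀ a, 0 ≤ α a ∧ α a ≤ δ a) ∧ (∑' a, α a) = ℓ ∧
      s = ∑' a : ℕ, (a : ℝ) * α a} := by
  refine ⟨∑ a ∈ hfin.toFinset, (a : ℝ) * δ a, ?_⟩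
  rintro s ⟨α, hα, -, rfl⟩
  have h0 : ∀ a ∉ hfin.toFinset, (a : ℝ) * α a = 0 := by
    intro a ha
    have hδ0 : δ a = 0 := by simpa [Function.notMem_support] using fun h => ha (hfin.mem_toFinset.2 h)
    have : α a = 0 := le_antisymm (hδ0 ▸ (hα a).2) (hα a).1
    simp [this]
  rw [tsum_eq_sum h0]
  exact Finset.sum_le_sum fun a _ => mul_le_mul_of_nonneg_left (hα a).2 (Nat.cast_nonneg a)


/-- Replacing each piece `θ^h` of `δ = θ^0 + ∑_h θ^h` by `|θ^h|_1` copies of a value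
`b_h ≤ γ · L1bar(θ^h)/|θ^h|_1` yields a vector dominated by `δ` with factor `γ`. -/
theorem stmt4 (n H : ℕ) (γ : ℝ) (hγ : 1 ≤ γ)
    (θ0 : ℕ → ℝ) (θ : Fin H → ℕ → ℝ)
    (hθ0 : ∀ a, 0 ≤ θ0 a) (hθ0fin : (Function.support θ0).Finite)
    (hθ : ∀ h a, 0 ≤ θ h a) (hθfin : ∀ h, (Function.support (θ h)).Finite)
    (hδ : memS n (fun a => θ0 a + ∑ h, θ h a))
    (b : Fin H → ℕ)
    (hb : ∀ h, (b h : ℝ) ≤ γ * (∑' a : ℕ, (a : ℝ) * θ h a) / (∑' a : ℕ, θ h a)) :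
    Dominates n γ
      (fun a => θ0 a + ∑ h, (∑' a' : ℕ, θ h a') * (if a = b h then 1 else 0))
      (fun a => θ0 a + ∑ h, θ h a) := by
  obtain ⟨hδnn, hδfin, hδsum⟩ := hδ
  set δ : ℕ → ℝ := fun a => θ0 a + ∑ h, θ h a with hδdef
  intro ℓ hℓ0 hℓn
  have hγ0 : (0:ℝ) ≤ γ := by linarith
  -- universal finite index set
  classical
  set U : Finset ℕ := hθ0fin.toFinset ∪ Finset.univ.biUnion (fun h => (hθfin h).toFinset)
      ∪ Finset.image b Finset.univ with hUdef
  have hθ0U : ∀ a ∉ U, θ0 a = 0 := by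
    intro a ha
    by_contra h
    exact ha (by simp [hUdef, Function.mem_support, h])
  have hθU : ∀ h a, a ∉ U → θ h a = 0 := by
    intro h a ha
    by_contra hne
    refine ha ?_
    simp only [hUdef, Finset.mem_union]
    exact Or.inl (Or.inr (by simp; exact ⟨h, hne⟩))
  have hbU : ∀ h, b h ∈ U := by
    intro h; simp [hUdef]
  -- masses and bar values
  set m : Fin H → ℝ := fun h => ∑' a, θ h a with hmdef
  set L : Fin H → ℝ := fun h => ∑' a : ℕ, (a:ℝ) * θ h a with hLdef
  have hmeq : ∀ h, m h = ∑ a ∈ U, θ h a := by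
    intro h; exact tsum_eq_sum (fun a ha => hθU h a ha)
  have hLeq : ∀ h, L h = ∑ a ∈ U, (a:ℝ) * θ h a := by
    intro h; exact tsum_eq_sum (fun a ha => by rw [hθU h a ha, mul_zero])
  have hmnn : ∀ h, 0 ≤ m h := fun h => tsum_nonneg (fun a => hθ h a)
  have hLnn : ∀ h, 0 ≤ L h := fun h => tsum_nonneg (fun a => mul_nonneg (Nat.cast_nonneg a) (hθ h a))
  have hδU : ∀ a ∉ U, δ a = 0 := by
    intro a ha
    simp [hδdef, hθ0U a ha, hθU _ a ha]
  have hδsum' : ∑ a ∈ U, δ a = n := by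
    rw [← tsum_eq_sum (L := SummationFilter.unconditional ℕ) (f := δ) (fun a ha => hδU a ha)]; exact hδsum
  -- Step A : 0 ≤ topBar δ ℓ
  have hA : 0 ≤ topBar δ ℓ := by
    set c : ℝ := ℓ / n with hcdef
    have hc0 : 0 ≤ c := div_nonneg hℓ0 (Nat.cast_nonneg n)
    have hc1 : c ≤ 1 := by
      rcases Nat.eq_zero_or_pos n with h | h
      · simp [hcdef, h]
      · rw [hcdef, div_le_one (by exact_mod_cast h)]; exact hℓn
    have hfeas : ∀ a, 0 ≤ c * δ a ∧ c * δ a ≤ δ a := by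
      intro a
      exact ⟨mul_nonneg hc0 (hδnn a), by nlinarith [hδnn a]⟩
    have hmass : (∑' a, c * δ a) = ℓ := by
      rw [tsum_eq_sum (s := U) (fun a ha => by rw [hδU a ha, mul_zero]),
        ← Finset.mul_sum, hδsum']
      rcases Nat.eq_zero_or_pos n with h | h
      · have : ℓ = 0 := le_antisymm (by simpa [h] using hℓn) hℓ0
        simp [this, h]
      · rw [hcdef]; field_simp
    have hmem : (∑' a : ℕ, (a:ℝ) * (c * δ a)) ∈ {s : ℝ | ∃ α : ℕ → ℝ,
        (∀ a, 0 ≤ α a ∧ α a ≤ δ a) ∧ (∑' a, α a) = ℓ ∧ s = ∑' a : ℕ, (a : ℝ) * α a} :=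
      ⟨fun a => c * δ a, hfeas, hmass, rfl⟩
    have := le_csSup (bdd_above_topBarSet δ hδfin ℓ) hmem
    refine le_trans ?_ this
    exact tsum_nonneg (fun a => mul_nonneg (Nat.cast_nonneg a) (hfeas a).1)
  -- Step B : main bound
  apply Real.sSup_le _ (mul_nonneg hγ0 hA)
  rintro s ⟨α', hα', hmass', rfl⟩
  -- decomposition
  set α0 : ℕ → ℝ := fun a => min (α' a) (θ0 a) with hα0def
  set R : ℕ → ℝ := fun a => α' a - α0 a with hRdef
  set M : ℕ → ℝ := fun a => ∑ h, m h * (if a = b h then 1 else 0) with hMdef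
  have hα'nn : ∀ a, 0 ≤ α' a := fun a => (hα' a).1
  have hα'le : ∀ a, α' a ≤ θ0 a + M a := fun a => (hα' a).2
  have hα0nn : ∀ a, 0 ≤ α0 a := fun a => le_min (hα'nn a) (hθ0 a)
  have hα0le : ∀ a, α0 a ≤ θ0 a := fun a => min_le_right _ _
  have hMnn : ∀ a, 0 ≤ M a := by
    intro a
    exact Finset.sum_nonneg fun h _ => mul_nonneg (hmnn h) (by positivity)
  have hR0 : ∀ a, 0 ≤ R a := fun a => sub_nonneg.2 (min_le_left _ _)
  have hRM : ∀ a, R a ≤ M a := by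
    intro a
    rcases le_total (α' a) (θ0 a) with h | h
    · simp only [hRdef, hα0def, min_eq_left h]
      simpa using hMnn a
    · simp only [hRdef, hα0def, min_eq_right h]
      have := hα'le a; linarith
  -- support facts
  have hα'U : ∀ a ∉ U, α' a = 0 := by
    intro a ha
    have hM0 : M a = 0 := by
      apply Finset.sum_eq_zero
      intro h _
      have : a ≠ b h := fun hEq => ha (hEq ▸ hbU h)
      simp [this]
    have := hα'le a
    rw [hθ0U a ha, hM0] at this
    exact le_antisymm (by linarith) (hα'nn a)
  have hα0U : ∀ a ∉ U, α0 a = 0 := by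
    intro a ha; simp [hα0def, hα'U a ha, hθ0U a ha]
  have hRU : ∀ a ∉ U, R a = 0 := by
    intro a ha; simp [hRdef, hα'U a ha, hα0U a ha]
  -- the transfers
  set t : Fin H → ℝ := fun h => m h * (R (b h) / M (b h)) with htdef
  have ht0 : ∀ h, 0 ≤ t h :=
    fun h => mul_nonneg (hmnn h) (div_nonneg (hR0 _) (hMnn _))
  have hratio : ∀ h, t h / m h ≤ 1 := by
    intro h
    rcases eq_or_ne (m h) 0 with h0 | h0
    · simp [htdef, h0]
    · rw [div_le_one (lt_of_le_of_ne (hmnn h) (Ne.symm h0)), htdef]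
      rcases eq_or_ne (M (b h)) 0 with hM0 | hM0
      · simp [hM0]; exact hmnn h
      · have : R (b h) / M (b h) ≤ 1 := by
          rw [div_le_one (lt_of_le_of_ne (hMnn _) (Ne.symm hM0))]; exact hRM _
        nlinarith [hmnn h]
  have hratio0 : ∀ h, 0 ≤ t h / m h := fun h => div_nonneg (ht0 h) (hmnn h)
  have htm0 : ∀ h, m h = 0 → t h = 0 := by intro h h0; simp [htdef, h0]
  have hdivmul : ∀ h, (t h / m h) * m h = t h := by
    intro h
    rcases eq_or_ne (m h) 0 with h0 | h0
    · simp [h0, htm0 h h0]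
    · field_simp
  -- grouping lemma
  have hgroup : ∀ g : ℕ → ℝ, ∑ h, g (b h) * t h = ∑ a ∈ U, g a * R a := by
    intro g
    rw [← Finset.sum_fiberwise_of_maps_to (g := b) (fun h _ => hbU h) (fun h => g (b h) * t h)]
    apply Finset.sum_congr rfl
    intro a _
    have hfil : ∀ h ∈ Finset.univ.filter (fun h => b h = a), g (b h) * t h
        = (g a * (R a / M a)) * m h := by
      intro h hh
      simp only [Finset.mem_filter] at hh
      simp only [htdef]
      rw [hh.2]; ring
    rw [Finset.sum_congr rfl hfil, ← Finset.mul_sum]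
    have hMa : ∑ h ∈ Finset.univ.filter (fun h => b h = a), m h = M a := by
      rw [hMdef]
      rw [Finset.sum_filter]
      apply Finset.sum_congr rfl
      intro h _
      by_cases hba : b h = a
      · rw [if_pos hba, if_pos hba.symm, mul_one]
      · rw [if_neg hba, if_neg (Ne.symm hba), mul_zero]
    rw [hMa]
    rcases eq_or_ne (M a) 0 with hM0 | hM0
    · have hRa : R a = 0 := le_antisymm (hM0 ▸ hRM a) (hR0 a)
      simp [hM0, hRa]
    · field_simp
  -- the witness α
  set α : ℕ → ℝ := fun a => α0 a + ∑ h, (t h / m h) * θ h a with hαdef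
  have hαfeas : ∀ a, 0 ≤ α a ∧ α a ≤ δ a := by
    intro a
    constructor
    · exact add_nonneg (hα0nn a) (Finset.sum_nonneg fun h _ =>
        mul_nonneg (hratio0 h) (hθ h a))
    · apply add_le_add (hα0le a)
      apply Finset.sum_le_sum
      intro h _
      nlinarith [hratio h, hθ h a, hratio0 h]
  have hαU : ∀ a ∉ U, α a = 0 := by
    intro a ha
    simp [hαdef, hα0U a ha, hθU _ a ha]
  -- mass of α
  have hαmass : (∑' a, α a) = ℓ := by
    rw [tsum_eq_sum (s := U) (fun a ha => hαU a ha)]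
    have : ∑ a ∈ U, α a = ∑ a ∈ U, α0 a + ∑ h, (t h / m h) * m h := by
      simp only [hαdef, Finset.sum_add_distrib]
      congr 1
      rw [Finset.sum_comm]
      apply Finset.sum_congr rfl
      intro h _
      rw [← Finset.mul_sum, hmeq h]
    rw [this]
    have h2 : ∑ h, (t h / m h) * m h = ∑ a ∈ U, R a := by
      rw [Finset.sum_congr rfl (fun h _ => hdivmul h)]
      have := hgroup (fun _ => 1)
      simpa using this
    rw [h2, ← Finset.sum_add_distrib]
    have : ∀ a ∈ U, α0 a + R a = α' a := by intro a _; simp [hRdef]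
    rw [Finset.sum_congr rfl this, ← tsum_eq_sum (L := SummationFilter.unconditional ℕ) (s := U) (fun a ha => hα'U a ha)]
    exact hmass'
  -- value comparison
  have hval : (∑' a : ℕ, (a:ℝ) * α a) = ∑ a ∈ U, (a:ℝ) * α0 a + ∑ h, (t h / m h) * L h := by
    rw [tsum_eq_sum (s := U) (fun a ha => by rw [hαU a ha, mul_zero])]
    simp only [hαdef, mul_add, Finset.sum_add_distrib, Finset.mul_sum]
    congr 1
    rw [Finset.sum_comm]
    apply Finset.sum_congr rfl
    intro h _
    rw [hLeq h, Finset.mul_sum]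
    apply Finset.sum_congr rfl
    intro a _; ring
  have hs : (∑' a : ℕ, (a:ℝ) * α' a) = ∑ a ∈ U, (a:ℝ) * α0 a + ∑ h, (b h : ℝ) * t h := by
    rw [tsum_eq_sum (s := U) (fun a ha => by rw [hα'U a ha, mul_zero])]
    rw [hgroup (fun a => (a:ℝ))]
    rw [← Finset.sum_add_distrib]
    apply Finset.sum_congr rfl
    intro a _
    simp [hRdef]; ring
  have hterm : ∀ h, (b h : ℝ) * t h ≤ γ * ((t h / m h) * L h) := by
    intro h
    rcases eq_or_ne (m h) 0 with h0 | h0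
    · simp [htm0 h h0, h0]
    · have hmpos : 0 < m h := lt_of_le_of_ne (hmnn h) (Ne.symm h0)
      have hbh : (b h : ℝ) ≤ γ * L h / m h := hb h
      have := mul_le_mul_of_nonneg_left hbh (ht0 h)
      calc (b h : ℝ) * t h = t h * (b h : ℝ) := by ring
        _ ≤ t h * (γ * L h / m h) := this
        _ = γ * ((t h / m h) * L h) := by field_simp
  have hA0 : 0 ≤ ∑ a ∈ U, (a:ℝ) * α0 a :=
    Finset.sum_nonneg fun a _ => mul_nonneg (Nat.cast_nonneg a) (hα0nn a)
  have hVle : (∑' a : ℕ, (a:ℝ) * α a) ≤ topBar δ ℓ :=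
    le_csSup (bdd_above_topBarSet δ hδfin ℓ) ⟨α, hαfeas, hαmass, rfl⟩
  calc (∑' a : ℕ, (a:ℝ) * α' a)
      = ∑ a ∈ U, (a:ℝ) * α0 a + ∑ h, (b h : ℝ) * t h := hs
    _ ≤ ∑ a ∈ U, (a:ℝ) * α0 a + ∑ h, γ * ((t h / m h) * L h) :=
        add_le_add_right (Finset.sum_le_sum fun h _ => hterm h) _
    _ ≤ γ * (∑ a ∈ U, (a:ℝ) * α0 a + ∑ h, (t h / m h) * L h) := by
        rw [← Finset.mul_sum]
        have hSnn : 0 ≤ ∑ h, (t h / m h) * L h :=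
          Finset.sum_nonneg fun h _ => mul_nonneg (hratio0 h) (hLnn h)
        nlinarith [mul_nonneg (sub_nonneg.2 hγ) hA0]
    _ = γ * (∑' a : ℕ, (a:ℝ) * α a) := by rw [hval]
    _ ≤ γ * topBar δ ℓ := mul_le_mul_of_nonneg_left hVle hγ0
end

section
/- Let δ, δ' ∈ S_n, let φ = δ ⊕ δ' be the vector obtained from the monotone matching of δ and δ', and let φ' ∈ S_n be any vector obtained by adding δ and δ' via an arbitrary matching. Then φ' ⪯ φ, i.e., top-ℓ-bar(φ') ≤ top-ℓ-bar(φ) for every real ℓ ∈ [0,n]. -/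
/-- `z` is a matching (transportation plan) between `δ` and `δ'`:
non-negative with row marginals `δ` and column marginals `δ'`. -/
def IsMatching (z : ℕ → ℕ → ℝ) (δ δ' : ℕ → ℝ) : Prop :=
  (∀ a a', 0 ≤ z a a') ∧ (∀ a, (∑' a', z a a') = δ a) ∧ (∀ a', (∑' a, z a a') = δ' a')

/-- The monotone-matching condition: no integers `a < a'`, `b > b'` with
`z_{a,b} > 0` and `z_{a',b'} > 0`. -/
def MonotoneMatching (z : ℕ → ℕ → ℝ) : Prop :=
  ¬ ∃ a a' b b' : ℕ, a < a' ∧ b' < b ∧ 0 < z a b ∧ 0 < z a' b'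

/-- The vector obtained by adding two vectors via the matching `z`:
`(addVec z)_t = ∑_{a+a'=t} z_{a,a'}`. -/
noncomputable def addVec (z : ℕ → ℕ → ℝ) : ℕ → ℝ :=
  fun t => ∑ p ∈ Finset.HasAntidiagonal.antidiagonal t, z p.1 p.2

open Finset Filter

/-! ### Auxiliary lemmas -/

noncomputable def tailS (f : ℕ → ℝ) (M k : ℕ) : ℝ :=
  ∑ t ∈ Finset.range M, if k < t then f t else 0

lemma ite_sum_zero {ι : Type*} {c : Prop} [Decidable c] {s : Finset ι} (f : ι → ℝ) :
    (if c then ∑ x ∈ s, f x else 0) = ∑ x ∈ s, (if c then f x else 0) := by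
  split_ifs <;> simp

lemma tailS_nonneg {f : ℕ → ℝ} (hf : ∀ t, 0 ≤ f t) (M k : ℕ) : 0 ≤ tailS f M k :=
  Finset.sum_nonneg fun t _ => by split_ifs with h; exacts [hf t, le_rfl]

lemma tailS_anti {f : ℕ → ℝ} (hf : ∀ t, 0 ≤ f t) (M : ℕ) {i j : ℕ} (hij : i ≤ j) :
    tailS f M j ≤ tailS f M i := by
  refine Finset.sum_le_sum fun t _ => ?_
  split_ifs with h1 h2 h2
  · exact le_refl _
  · omega
  · exact hf t
  · exact le_refl _

lemma tailS_eq_zero {f : ℕ → ℝ} {M k : ℕ} (h : M ≤ k + 1) : tailS f M k = 0 :=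
  Finset.sum_eq_zero fun t ht => if_neg (by rw [Finset.mem_range] at ht; omega)

lemma tailS_succ {f : ℕ → ℝ} {M k : ℕ} (h : k + 1 < M) :
    tailS f M k = f (k + 1) + tailS f M (k + 1) := by
  unfold tailS
  have hpt : ∀ t ∈ Finset.range M,
      (if k < t then f t else 0) =
        (if t = k + 1 then f t else 0) + (if k + 1 < t then f t else 0) := by
    intro t _
    by_cases h1 : t = k + 1 <;> by_cases h2 : k < t <;> by_cases h3 : k + 1 < t <;>
      simp [h1, h2, h3] <;> omega
  rw [Finset.sum_congr rfl hpt, Finset.sum_add_distrib, Finset.sum_ite_eq' (Finset.range M) (k+1) f,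
    if_pos (Finset.mem_range.mpr h)]

lemma range_head {f : ℕ → ℝ} {M : ℕ} (h : 0 < M) :
    ∑ t ∈ Finset.range M, f t = f 0 + tailS f M 0 := by
  unfold tailS
  have hpt : ∀ t ∈ Finset.range M,
      f t = (if t = 0 then f t else 0) + (if 0 < t then f t else 0) := by
    intro t _
    by_cases h1 : t = 0
    · simp [h1]
    · simp [h1, Nat.pos_of_ne_zero h1]
  rw [Finset.sum_congr rfl hpt, Finset.sum_add_distrib, Finset.sum_ite_eq' (Finset.range M) 0 f,
    if_pos (Finset.mem_range.mpr h)]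

lemma abel_sum (α : ℕ → ℝ) (M : ℕ) :
    ∑ t ∈ Finset.range M, (t : ℝ) * α t = ∑ k ∈ Finset.range M, tailS α M k := by
  unfold tailS
  rw [Finset.sum_comm]
  refine Finset.sum_congr rfl fun t ht => ?_
  have htM : t < M := Finset.mem_range.mp ht
  have hfil : (Finset.range M).filter (fun k => k < t) = Finset.range t := by
    ext k; simp only [Finset.mem_filter, Finset.mem_range]; omega
  rw [← Finset.sum_filter, hfil, Finset.sum_const, Finset.card_range, nsmul_eq_mul]

lemma minRecAux (ℓ T p : ℝ) (hT : 0 ≤ T) (hp : 0 ≤ p) (hl : 0 ≤ ℓ) :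
    min p (max 0 (ℓ - T)) + min ℓ T = min ℓ (p + T) := by
  simp only [min_def, max_def]
  split_ifs <;> linarith

/-- The merge lemma: if `h` pointwise dominates the "monotone merge" shape of two
antitone sequences `g, g'` then the sum of `h` dominates the sum of the merges. -/
lemma mergeM : ∀ (K : ℕ) (g g' h : ℕ → ℝ),
    (∀ i j, i ≤ j → g j ≤ g i) → (∀ i j, i ≤ j → g' j ≤ g' i) →
    (∀ t, g t ≤ h t) → (∀ t, g' t ≤ h t) →
    (∀ a b, min (g a) (g' b) ≤ h (a + b + 1)) →
    ∀ N M, N + M ≤ K →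
      (∑ a ∈ Finset.range N, g a) + (∑ b ∈ Finset.range M, g' b) ≤
        ∑ t ∈ Finset.range (N + M), h t := by
  intro K
  induction K with
  | zero =>
    intro g g' h _ _ _ _ _ N M hNM
    have hN : N = 0 := by omega
    have hM : M = 0 := by omega
    subst hN; subst hM; simp
  | succ K ih =>
    intro g g' h hg hg' h1 h2 h3 N M hNM
    match N, M with
    | 0, M =>
      simpa using Finset.sum_le_sum (fun t (_ : t ∈ Finset.range M) => h2 t)
    | N + 1, 0 =>
      simpa using Finset.sum_le_sum (fun t (_ : t ∈ Finset.range (N+1)) => h1 t)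
    | N + 1, M + 1 =>
      rcases le_total (g' 0) (g 0) with hc | hc
      · have step := ih (fun a => g (a + 1)) g' (fun t => h (t + 1))
          (fun i j hij => hg (i+1) (j+1) (by omega))
          hg'
          (fun t => h1 (t + 1))
          (fun t => by
            have := h3 0 t
            rw [min_eq_right (le_trans (hg' 0 t (Nat.zero_le t)) hc)] at this
            simpa using this)
          (fun a b => by
            have := h3 (a + 1) b
            have heq : a + 1 + b + 1 = a + b + 1 + 1 := by omega
            rw [heq] at this
            exact this)
          N (M + 1) (by omega)
        have hsplit1 : ∑ a ∈ Finset.range (N + 1), g a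
            = (∑ a ∈ Finset.range N, g (a + 1)) + g 0 := Finset.sum_range_succ' g N
        have hsplit2 : ∑ t ∈ Finset.range (N + 1 + (M + 1)), h t
            = (∑ t ∈ Finset.range (N + (M + 1)), h (t + 1)) + h 0 := by
          have : N + 1 + (M + 1) = (N + (M + 1)) + 1 := by omega
          rw [this]; exact Finset.sum_range_succ' h (N + (M+1))
        rw [hsplit1, hsplit2]
        have := h1 0
        linarith [step]
      · have step := ih g (fun b => g' (b + 1)) (fun t => h (t + 1))
          hg
          (fun i j hij => hg' (i+1) (j+1) (by omega))
          (fun t => by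
            have := h3 t 0
            rw [min_eq_left (le_trans (hg 0 t (Nat.zero_le t)) hc)] at this
            simpa using this)
          (fun t => h2 (t + 1))
          (fun a b => by
            have := h3 a (b + 1)
            have heq : a + (b + 1) + 1 = a + b + 1 + 1 := by omega
            rw [heq] at this
            exact this)
          (N + 1) M (by omega)
        have hsplit1 : ∑ b ∈ Finset.range (M + 1), g' b
            = (∑ b ∈ Finset.range M, g' (b + 1)) + g' 0 := Finset.sum_range_succ' g' M
        have hsplit2 : ∑ t ∈ Finset.range (N + 1 + (M + 1)), h t
            = (∑ t ∈ Finset.range (N + 1 + M), h (t + 1)) + h 0 := by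
          have : N + 1 + (M + 1) = (N + 1 + M) + 1 := by omega
          rw [this]; exact Finset.sum_range_succ' h (N + 1 + M)
        rw [hsplit1, hsplit2]
        have := h2 0
        linarith [step]

lemma addVec_nonneg {w : ℕ → ℕ → ℝ} (hw : ∀ a b, 0 ≤ w a b) (t : ℕ) : 0 ≤ addVec w t :=
  Finset.sum_nonneg fun p _ => hw p.1 p.2

lemma addVec_swap (w : ℕ → ℕ → ℝ) : addVec (fun a b => w b a) = addVec w := by
  funext t
  unfold addVec
  conv_rhs => rw [← Finset.HasAntidiagonal.map_swap_antidiagonal (n := t)]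
  rw [Finset.sum_map]
  rfl

lemma transpose_matching {z : ℕ → ℕ → ℝ} {δ δ' : ℕ → ℝ} (hz : IsMatching z δ δ') :
    IsMatching (fun a b => z b a) δ' δ :=
  ⟨fun a b => hz.1 b a, hz.2.2, hz.2.1⟩

lemma transpose_mono {z : ℕ → ℕ → ℝ} (hz : MonotoneMatching z) :
    MonotoneMatching (fun a b => z b a) := by
  rintro ⟨a, a', b, b', h1, h2, h3, h4⟩
  exact hz ⟨b', b, a', a, h2, h1, h4, h3⟩

lemma rows_summable (z : ℕ → ℕ → ℝ) (δ δ' : ℕ → ℝ) (hz : IsMatching z δ δ')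
    (hzm : MonotoneMatching z) (hfin : (Function.support δ').Finite) (a₀ : ℕ) :
    Summable (fun b => z a₀ b) := by
  by_contra hns
  set P := {b | 0 < z a₀ b} with hP
  have hPinf : P.Infinite := by
    by_contra hfinP
    rw [Set.not_infinite] at hfinP
    apply hns
    refine summable_of_ne_finset_zero (s := hfinP.toFinset) (fun b hb => ?_)
    by_contra h0
    exact hb (hfinP.mem_toFinset.mpr (lt_of_le_of_ne (hz.1 a₀ b) (Ne.symm h0)))
  obtain ⟨b₁, hb₁⟩ := hPinf.nonempty
  have key : ∀ b, b₁ < b → b ∈ P → δ' b ≠ 0 := by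
    intro b hb hbP
    have hsingle : ∀ a, a ≠ a₀ → z a b = 0 := by
      intro a ha
      by_contra h0
      have hzab : 0 < z a b := lt_of_le_of_ne (hz.1 a b) (Ne.symm h0)
      rcases lt_or_gt_of_ne ha with hlt | hgt
      · exact hzm ⟨a, a₀, b, b₁, hlt, hb, hzab, hb₁⟩
      · obtain ⟨b', hb'P, hbb'⟩ := hPinf.exists_gt b
        exact hzm ⟨a₀, a, b', b, hgt, hbb', hb'P, hzab⟩
    have : δ' b = z a₀ b := by
      rw [← hz.2.2 b]; exact tsum_eq_single a₀ hsingle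
    rw [this]; exact ne_of_gt hbP
  have hsub : P \ Set.Iic b₁ ⊆ Function.support δ' := by
    rintro b ⟨hbP, hbI⟩
    exact key b (by simpa using hbI) hbP
  exact hfin.not_infinite (((hPinf.diff (Set.finite_Iic b₁))).mono hsub)

lemma topBar_nonneg (ψ : ℕ → ℝ) (ℓ : ℝ) : 0 ≤ topBar ψ ℓ := by
  refine Real.sSup_nonneg ?_
  rintro x ⟨α, hα, -, rfl⟩
  exact tsum_nonneg fun t => mul_nonneg (Nat.cast_nonneg t) (hα t).1

lemma topBar_zero (ψ : ℕ → ℝ) (hψ : ∀ t, 0 ≤ ψ t) : topBar ψ 0 = 0 := by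
  unfold topBar
  have hset : {s : ℝ | ∃ α : ℕ → ℝ, (∀ a, 0 ≤ α a ∧ α a ≤ ψ a) ∧ (∑' a, α a) = 0 ∧
      s = ∑' a : ℕ, (a : ℝ) * α a} = {(0 : ℝ)} := by
    ext s
    simp only [Set.mem_setOf_eq, Set.mem_singleton_iff]
    constructor
    · rintro ⟨α, hα, hsum, rfl⟩
      by_cases hs : Summable α
      · have hzero : ∀ t, α t = 0 := fun t =>
          le_antisymm (hsum ▸ Summable.le_tsum hs t fun j _ => (hα j).1) (hα t).1
        simp [hzero]
      · apply tsum_eq_zero_of_not_summable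
        intro hcon
        apply hs
        have hone : Summable (fun t : ℕ => if t = 0 then α 0 else 0) := by
          refine summable_of_ne_finset_zero (s := {0}) (fun b hb => ?_)
          rw [if_neg]; simpa using hb
        have h1 : Summable (fun t : ℕ => (t : ℝ) * α t + if t = 0 then α 0 else 0) :=
          hcon.add hone
        refine Summable.of_nonneg_of_le (fun t => (hα t).1) (fun t => ?_) h1
        rcases Nat.eq_zero_or_pos t with rfl | ht
        · simp
        · have hc : (1 : ℝ) ≤ (t : ℝ) := by exact_mod_cast ht
          have := mul_le_mul_of_nonneg_right hc (hα t).1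
          rw [one_mul] at this
          rw [if_neg (by omega)]
          linarith
    · rintro rfl
      exact ⟨0, fun a => ⟨le_refl _, hψ a⟩, tsum_zero, by simp⟩
  rw [hset, csSup_singleton]

/-- If some row of `w` is not summable, the LP feasible values are unbounded. -/
lemma unbdd (w : ℕ → ℕ → ℝ) (hpos : ∀ a b, 0 ≤ w a b) (a₀ : ℕ)
    (hns : ¬ Summable (fun b => w a₀ b)) (ℓ : ℝ) (hl : 0 < ℓ) :
    ¬ BddAbove {s : ℝ | ∃ α : ℕ → ℝ, (∀ a, 0 ≤ α a ∧ α a ≤ addVec w a) ∧ (∑' a, α a) = ℓ ∧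
      s = ∑' a : ℕ, (a : ℝ) * α a} := by
  rw [not_bddAbove_iff]
  intro x
  obtain ⟨K, hK⟩ := exists_nat_gt (x / ℓ)
  have htend := (not_summable_iff_tendsto_nat_atTop_of_nonneg (hpos a₀)).mp hns
  have hev : ∀ᶠ R in atTop, ℓ + ∑ b ∈ Finset.range K, w a₀ b ≤ ∑ b ∈ Finset.range R, w a₀ b :=
    htend.eventually_ge_atTop _
  obtain ⟨R, hR1, hR2⟩ := ((eventually_ge_atTop K).and hev).exists
  have hW : ℓ ≤ ∑ b ∈ Finset.Ico K R, w a₀ b := by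
    have := Finset.sum_Ico_eq_sub (w a₀) hR1
    linarith
  set W := ∑ b ∈ Finset.Ico K R, w a₀ b with hWdef
  have hW0 : 0 < W := lt_of_lt_of_le hl hW
  set c := ℓ / W with hcdef
  have hc0 : 0 ≤ c := div_nonneg hl.le hW0.le
  have hc1 : c ≤ 1 := (div_le_one hW0).mpr hW
  set α : ℕ → ℝ := fun t => if a₀ + K ≤ t ∧ t < a₀ + R then c * w a₀ (t - a₀) else 0 with hαdef
  have hα0 : ∀ t, t ∉ Finset.Ico (a₀ + K) (a₀ + R) → α t = 0 := by
    intro t ht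
    rw [Finset.mem_Ico] at ht
    exact if_neg ht
  have hsum : ∑ t ∈ Finset.Ico (a₀ + K) (a₀ + R), α t = c * W := by
    rw [hWdef, Finset.mul_sum, Finset.sum_Ico_eq_sum_range, Finset.sum_Ico_eq_sum_range]
    have hRK : a₀ + R - (a₀ + K) = R - K := by omega
    rw [hRK]
    refine Finset.sum_congr rfl fun k hk => ?_
    have hk' : k < R - K := Finset.mem_range.mp hk
    simp only [hαdef]
    rw [if_pos ⟨by omega, by omega⟩]
    have : a₀ + K + k - a₀ = K + k := by omega
    rw [this]
  have hαub : ∀ t, 0 ≤ α t ∧ α t ≤ addVec w t := by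
    intro t
    constructor
    · simp only [hαdef]
      split_ifs
      · exact mul_nonneg hc0 (hpos _ _)
      · exact le_refl 0
    · simp only [hαdef]
      split_ifs with h
      · calc c * w a₀ (t - a₀) ≤ 1 * w a₀ (t - a₀) :=
              mul_le_mul_of_nonneg_right hc1 (hpos _ _)
          _ = w a₀ (t - a₀) := one_mul _
          _ ≤ addVec w t := by
              refine Finset.single_le_sum (f := fun p : ℕ × ℕ => w p.1 p.2)
                (fun p _ => hpos p.1 p.2) (a := (a₀, t - a₀)) ?_
              rw [Finset.HasAntidiagonal.mem_antidiagonal]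
              omega
      · exact addVec_nonneg hpos t
  have hsum' : (∑' t, α t) = ℓ := by
    rw [tsum_eq_sum hα0, hsum, hcdef, div_mul_cancel₀ ℓ hW0.ne']
  refine ⟨∑' t : ℕ, (t : ℝ) * α t, ⟨α, hαub, hsum', rfl⟩, ?_⟩
  have heq : (∑' t : ℕ, (t : ℝ) * α t) = ∑ t ∈ Finset.Ico (a₀ + K) (a₀ + R), (t : ℝ) * α t :=
    tsum_eq_sum (fun t ht => by rw [hα0 t ht, mul_zero])
  rw [heq]
  have hge : ∀ t ∈ Finset.Ico (a₀ + K) (a₀ + R), (K : ℝ) * α t ≤ (t : ℝ) * α t := by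
    intro t ht
    rw [Finset.mem_Ico] at ht
    refine mul_le_mul_of_nonneg_right ?_ (hαub t).1
    exact_mod_cast (by omega : K ≤ t)
  calc x < (K : ℝ) * ℓ := by
        rw [div_lt_iff₀ hl] at hK; linarith
    _ = (K : ℝ) * (c * W) := by rw [hcdef, div_mul_cancel₀ ℓ hW0.ne']
    _ = ∑ t ∈ Finset.Ico (a₀ + K) (a₀ + R), (K : ℝ) * α t := by
        rw [← Finset.mul_sum, hsum]
    _ ≤ ∑ t ∈ Finset.Ico (a₀ + K) (a₀ + R), (t : ℝ) * α t := Finset.sum_le_sum hge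


/-! ### Grid lemmas for matchings with finite support -/

lemma grid_fiber (N : ℕ) (w : ℕ → ℕ → ℝ) (h0 : ∀ a b, N ≤ a ∨ N ≤ b → w a b = 0) (t : ℕ) :
    addVec w t = ∑ p ∈ (Finset.range N ×ˢ Finset.range N).filter (fun p => p.1 + p.2 = t),
      w p.1 p.2 := by
  unfold addVec
  refine (Finset.sum_subset ?_ ?_).symm
  · intro p hp
    rw [Finset.mem_filter] at hp
    rw [Finset.HasAntidiagonal.mem_antidiagonal]
    exact hp.2
  · intro p hp hnp
    rw [Finset.HasAntidiagonal.mem_antidiagonal] at hp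
    have hng : p ∉ Finset.range N ×ˢ Finset.range N := fun h =>
      hnp (Finset.mem_filter.mpr ⟨h, hp⟩)
    rw [Finset.mem_product, Finset.mem_range, Finset.mem_range] at hng
    exact h0 p.1 p.2 (by omega)

lemma addVec_eq_zero (N : ℕ) (w : ℕ → ℕ → ℝ) (h0 : ∀ a b, N ≤ a ∨ N ≤ b → w a b = 0)
    {t : ℕ} (ht : 2 * N ≤ t) : addVec w t = 0 := by
  unfold addVec
  refine Finset.sum_eq_zero fun p hp => ?_
  rw [Finset.HasAntidiagonal.mem_antidiagonal] at hp
  exact h0 p.1 p.2 (by omega)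

lemma fiber_sum (N : ℕ) (y : ℕ → ℕ → ℝ) (α : ℕ → ℝ) (F : ℕ → ℝ)
    (hα : ∀ t, t < 2 * N →
      α t = ∑ p ∈ (Finset.range N ×ˢ Finset.range N).filter (fun p => p.1 + p.2 = t),
        y p.1 p.2) :
    ∑ t ∈ Finset.range (2 * N), F t * α t
      = ∑ p ∈ Finset.range N ×ˢ Finset.range N, F (p.1 + p.2) * y p.1 p.2 := by
  have hmaps : ∀ p ∈ Finset.range N ×ˢ Finset.range N,
      (fun p : ℕ × ℕ => p.1 + p.2) p ∈ Finset.range (2 * N) := by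
    intro p hp
    rw [Finset.mem_product, Finset.mem_range, Finset.mem_range] at hp
    simp only [Finset.mem_range]
    omega
  rw [← Finset.sum_fiberwise_of_maps_to hmaps (fun p => F (p.1 + p.2) * y p.1 p.2)]
  refine Finset.sum_congr rfl fun t ht => ?_
  rw [hα t (Finset.mem_range.mp ht), Finset.mul_sum]
  refine Finset.sum_congr rfl fun p hp => ?_
  rw [(Finset.mem_filter.mp hp).2]

lemma tail_grid (N : ℕ) (w : ℕ → ℕ → ℝ) (h0 : ∀ a b, N ≤ a ∨ N ≤ b → w a b = 0) (k : ℕ) :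
    tailS (addVec w) (2 * N) k
      = ∑ p ∈ Finset.range N ×ˢ Finset.range N,
          (if k < p.1 + p.2 then w p.1 p.2 else 0) := by
  have h1 : ∀ t ∈ Finset.range (2 * N),
      (if k < t then addVec w t else 0) = (if k < t then (1:ℝ) else 0) * addVec w t := by
    intro t _
    split_ifs <;> simp
  unfold tailS
  rw [Finset.sum_congr rfl h1,
    fiber_sum N w (addVec w) (fun t => if k < t then (1:ℝ) else 0)
      (fun t _ => grid_fiber N w h0 t)]
  refine Finset.sum_congr rfl fun p _ => ?_
  split_ifs <;> simp

lemma tail_row (N : ℕ) (w : ℕ → ℕ → ℝ) (δ : ℕ → ℝ)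
    (hrow : ∀ a, ∑ b ∈ Finset.range N, w a b = δ a) (k : ℕ) :
    tailS δ N k = ∑ p ∈ Finset.range N ×ˢ Finset.range N,
      (if k < p.1 then w p.1 p.2 else 0) := by
  rw [Finset.sum_product]
  unfold tailS
  refine Finset.sum_congr rfl fun a _ => ?_
  rw [← hrow a, _root_.ite_sum_zero]

lemma tail_col (N : ℕ) (w : ℕ → ℕ → ℝ) (δ' : ℕ → ℝ)
    (hcol : ∀ b, ∑ a ∈ Finset.range N, w a b = δ' b) (k : ℕ) :
    tailS δ' N k = ∑ p ∈ Finset.range N ×ˢ Finset.range N,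
      (if k < p.2 then w p.1 p.2 else 0) := by
  rw [Finset.sum_product, Finset.sum_comm]
  unfold tailS
  refine Finset.sum_congr rfl fun b _ => ?_
  rw [← hcol b, _root_.ite_sum_zero]

lemma tail_le_row (N : ℕ) (w : ℕ → ℕ → ℝ) (δ : ℕ → ℝ) (hpos : ∀ a b, 0 ≤ w a b)
    (h0 : ∀ a b, N ≤ a ∨ N ≤ b → w a b = 0)
    (hrow : ∀ a, ∑ b ∈ Finset.range N, w a b = δ a) (k : ℕ) :
    tailS δ N k ≤ tailS (addVec w) (2 * N) k := by
  rw [tail_row N w δ hrow k, tail_grid N w h0 k]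
  refine Finset.sum_le_sum fun p _ => ?_
  split_ifs <;> first | omega | exact le_refl _ | exact hpos p.1 p.2

lemma tail_le_col (N : ℕ) (w : ℕ → ℕ → ℝ) (δ' : ℕ → ℝ) (hpos : ∀ a b, 0 ≤ w a b)
    (h0 : ∀ a b, N ≤ a ∨ N ≤ b → w a b = 0)
    (hcol : ∀ b, ∑ a ∈ Finset.range N, w a b = δ' b) (k : ℕ) :
    tailS δ' N k ≤ tailS (addVec w) (2 * N) k := by
  rw [tail_col N w δ' hcol k, tail_grid N w h0 k]
  refine Finset.sum_le_sum fun p _ => ?_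
  split_ifs <;> first | omega | exact le_refl _ | exact hpos p.1 p.2

lemma keymin (N : ℕ) (w : ℕ → ℕ → ℝ) (δ δ' : ℕ → ℝ) (hpos : ∀ a b, 0 ≤ w a b)
    (h0 : ∀ a b, N ≤ a ∨ N ≤ b → w a b = 0)
    (hrow : ∀ a, ∑ b ∈ Finset.range N, w a b = δ a)
    (hcol : ∀ b, ∑ a ∈ Finset.range N, w a b = δ' b)
    (hm : MonotoneMatching w) (a b : ℕ) :
    min (tailS δ N a) (tailS δ' N b) ≤ tailS (addVec w) (2 * N) (a + b + 1) := by
  set G := Finset.range N ×ˢ Finset.range N with hG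
  set R1 := ∑ p ∈ G, (if a < p.1 ∧ p.1 + p.2 ≤ a + b + 1 then w p.1 p.2 else 0) with hR1def
  set R2 := ∑ p ∈ G, (if b < p.2 ∧ p.1 + p.2 ≤ a + b + 1 then w p.1 p.2 else 0) with hR2def
  have h1 : tailS δ N a ≤ tailS (addVec w) (2 * N) (a + b + 1) + R1 := by
    rw [tail_row N w δ hrow a, tail_grid N w h0 (a + b + 1), hR1def, ← Finset.sum_add_distrib]
    refine Finset.sum_le_sum fun p _ => ?_
    split_ifs <;> first | omega | linarith [hpos p.1 p.2]
  have h2 : tailS δ' N b ≤ tailS (addVec w) (2 * N) (a + b + 1) + R2 := by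
    rw [tail_col N w δ' hcol b, tail_grid N w h0 (a + b + 1), hR2def, ← Finset.sum_add_distrib]
    refine Finset.sum_le_sum fun p _ => ?_
    split_ifs <;> first | omega | linarith [hpos p.1 p.2]
  have key : R1 = 0 ∨ R2 = 0 := by
    by_contra hcon
    push_neg at hcon
    have hpR1 : ∃ p ∈ G, (0:ℝ) < (if a < p.1 ∧ p.1 + p.2 ≤ a + b + 1 then w p.1 p.2 else 0) := by
      by_contra hall
      push_neg at hall
      have : R1 ≤ 0 := hR1def ▸ Finset.sum_nonpos fun p hp => hall p hp
      have : 0 ≤ R1 := hR1def ▸ Finset.sum_nonneg fun p _ => by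
        split_ifs; exacts [hpos p.1 p.2, le_rfl]
      exact hcon.1 (le_antisymm ‹R1 ≤ 0› this)
    have hpR2 : ∃ p ∈ G, (0:ℝ) < (if b < p.2 ∧ p.1 + p.2 ≤ a + b + 1 then w p.1 p.2 else 0) := by
      by_contra hall
      push_neg at hall
      have : R2 ≤ 0 := hR2def ▸ Finset.sum_nonpos fun p hp => hall p hp
      have : 0 ≤ R2 := hR2def ▸ Finset.sum_nonneg fun p _ => by
        split_ifs; exacts [hpos p.1 p.2, le_rfl]
      exact hcon.2 (le_antisymm ‹R2 ≤ 0› this)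
    obtain ⟨p, -, hp⟩ := hpR1
    obtain ⟨q, -, hq⟩ := hpR2
    by_cases hc1 : a < p.1 ∧ p.1 + p.2 ≤ a + b + 1
    · by_cases hc2 : b < q.2 ∧ q.1 + q.2 ≤ a + b + 1
      · rw [if_pos hc1] at hp
        rw [if_pos hc2] at hq
        exact hm ⟨q.1, p.1, q.2, p.2, by omega, by omega, hq, hp⟩
      · rw [if_neg hc2] at hq; exact absurd hq (lt_irrefl 0)
    · rw [if_neg hc1] at hp; exact absurd hp (lt_irrefl 0)
  rcases key with hk | hk
  · refine le_trans (min_le_left _ _) ?_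
    rw [hk] at h1; linarith
  · refine le_trans (min_le_right _ _) ?_
    rw [hk] at h2; linarith

/-! ### Main lemma: the finite, "honest" case -/

lemma mainLemma (N : ℕ) (hN : 0 < N) (δ δ' : ℕ → ℝ) (z z' : ℕ → ℕ → ℝ)
    (hzpos : ∀ a b, 0 ≤ z a b) (hz0 : ∀ a b, N ≤ a ∨ N ≤ b → z a b = 0)
    (hzrow : ∀ a, ∑ b ∈ Finset.range N, z a b = δ a)
    (hzcol : ∀ b, ∑ a ∈ Finset.range N, z a b = δ' b)
    (hzm : MonotoneMatching z)
    (hz'pos : ∀ a b, 0 ≤ z' a b) (hz'0 : ∀ a b, N ≤ a ∨ N ≤ b → z' a b = 0)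
    (hz'row : ∀ a, ∑ b ∈ Finset.range N, z' a b = δ a)
    (hz'col : ∀ b, ∑ a ∈ Finset.range N, z' a b = δ' b)
    (ℓ : ℝ) (hl0 : 0 ≤ ℓ) (hln : ℓ ≤ ∑ a ∈ Finset.range N, δ a) :
    topBar (addVec z') ℓ ≤ topBar (addVec z) ℓ := by
  have hδpos : ∀ a, 0 ≤ δ a := fun a =>
    (hzrow a) ▸ Finset.sum_nonneg fun b _ => hzpos a b
  have hδ'pos : ∀ b, 0 ≤ δ' b := fun b =>
    (hzcol b) ▸ Finset.sum_nonneg fun a _ => hzpos a b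
  set G := Finset.range N ×ˢ Finset.range N with hG
  set B := (∑ k ∈ Finset.range N, min ℓ (tailS δ N k))
    + (∑ k ∈ Finset.range N, min ℓ (tailS δ' N k)) with hBdef
  have hBnn : 0 ≤ B := by
    rw [hBdef]
    have : ∀ (f : ℕ → ℝ), (∀ t, 0 ≤ f t) → 0 ≤ ∑ k ∈ Finset.range N, min ℓ (tailS f N k) :=
      fun f hf => Finset.sum_nonneg fun k _ => le_min hl0 (tailS_nonneg hf N k)
    linarith [this δ hδpos, this δ' hδ'pos]
  -- Part U : every feasible value for addVec z' is at most B
  have partU : ∀ s ∈ {s : ℝ | ∃ α : ℕ → ℝ, (∀ a, 0 ≤ α a ∧ α a ≤ addVec z' a) ∧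
      (∑' a, α a) = ℓ ∧ s = ∑' a : ℕ, (a : ℝ) * α a}, s ≤ B := by
    rintro s ⟨α, hα, hαsum, rfl⟩
    have hφ'pos : ∀ t, 0 ≤ addVec z' t := addVec_nonneg hz'pos
    have hα0 : ∀ t, t ∉ Finset.range (2 * N) → α t = 0 := by
      intro t ht
      rw [Finset.mem_range, not_lt] at ht
      exact le_antisymm ((hα t).2.trans_eq (addVec_eq_zero N z' hz'0 ht)) (hα t).1
    have hsumfin : ∑ t ∈ Finset.range (2 * N), α t = ℓ := by
      rw [← tsum_eq_sum (L := SummationFilter.unconditional ℕ) hα0]; exact hαsum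
    set y : ℕ → ℕ → ℝ := fun a b =>
      if 0 < addVec z' (a + b) then z' a b * (α (a + b) / addVec z' (a + b)) else 0 with hydef
    have hypos : ∀ a b, 0 ≤ y a b := by
      intro a b
      simp only [hydef]
      split_ifs with h
      · exact mul_nonneg (hz'pos a b) (div_nonneg (hα _).1 h.le)
      · exact le_rfl
    have hyle : ∀ a b, y a b ≤ z' a b := by
      intro a b
      simp only [hydef]
      split_ifs with h
      · exact mul_le_of_le_one_right (hz'pos a b) ((div_le_one h).mpr (hα _).2)
      · exact hz'pos a b
    have hfib : ∀ t, t < 2 * N →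
        α t = ∑ p ∈ G.filter (fun p => p.1 + p.2 = t), y p.1 p.2 := by
      intro t _
      by_cases hφp : 0 < addVec z' t
      · have hcongr : ∀ p ∈ G.filter (fun p => p.1 + p.2 = t),
            y p.1 p.2 = (α t / addVec z' t) * z' p.1 p.2 := by
          intro p hp
          have hpt := (Finset.mem_filter.mp hp).2
          simp only [hydef, hpt, if_pos hφp]
          ring
        rw [Finset.sum_congr rfl hcongr, ← Finset.mul_sum, hG,
          ← grid_fiber N z' hz'0 t, div_mul_cancel₀ _ (ne_of_gt hφp)]
      · have hφ0 : addVec z' t = 0 := le_antisymm (not_lt.mp hφp) (hφ'pos t)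
        have hαt : α t = 0 := le_antisymm ((hα t).2.trans_eq hφ0) (hα t).1
        rw [hαt]
        refine (Finset.sum_eq_zero fun p hp => ?_).symm
        have hpt := (Finset.mem_filter.mp hp).2
        simp only [hydef, hpt, if_neg hφp]
    have hs : (∑' t : ℕ, (t : ℝ) * α t) = ∑ t ∈ Finset.range (2 * N), (t : ℝ) * α t :=
      tsum_eq_sum fun t ht => by rw [hα0 t ht, mul_zero]
    rw [hs]
    have hobj : ∑ t ∈ Finset.range (2 * N), (t : ℝ) * α t
        = ∑ p ∈ G, ((p.1 + p.2 : ℕ) : ℝ) * y p.1 p.2 :=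
      fiber_sum N y α (fun t => (t : ℝ)) hfib
    set β : ℕ → ℝ := fun a => ∑ b ∈ Finset.range N, y a b with hβdef
    set β' : ℕ → ℝ := fun b => ∑ a ∈ Finset.range N, y a b with hβ'def
    have hsplit : ∑ p ∈ G, ((p.1 + p.2 : ℕ) : ℝ) * y p.1 p.2
        = (∑ a ∈ Finset.range N, (a : ℝ) * β a) + (∑ b ∈ Finset.range N, (b : ℝ) * β' b) := by
      have e1 : ∑ p ∈ G, ((p.1 + p.2 : ℕ) : ℝ) * y p.1 p.2
          = ∑ p ∈ G, ((p.1 : ℝ) * y p.1 p.2 + (p.2 : ℝ) * y p.1 p.2) := by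
        refine Finset.sum_congr rfl fun p _ => ?_
        push_cast
        ring
      rw [e1, Finset.sum_add_distrib, hG]
      congr 1
      · rw [Finset.sum_product]
        refine Finset.sum_congr rfl fun a _ => ?_
        rw [hβdef, Finset.mul_sum]
      · rw [Finset.sum_product, Finset.sum_comm]
        refine Finset.sum_congr rfl fun b _ => ?_
        rw [hβ'def, Finset.mul_sum]
    have hβpos : ∀ a, 0 ≤ β a := fun a =>
      Finset.sum_nonneg fun b _ => hypos a b
    have hβ'pos : ∀ b, 0 ≤ β' b := fun b =>
      Finset.sum_nonneg fun a _ => hypos a b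
    have hβle : ∀ a, β a ≤ δ a := fun a => by
      rw [hβdef, ← hz'row a]
      exact Finset.sum_le_sum fun b _ => hyle a b
    have hβ'le : ∀ b, β' b ≤ δ' b := fun b => by
      rw [hβ'def, ← hz'col b]
      exact Finset.sum_le_sum fun a _ => hyle a b
    have hytot : ∑ p ∈ G, y p.1 p.2 = ℓ := by
      have := fiber_sum N y α (fun _ => (1 : ℝ)) hfib
      simp only [one_mul] at this
      rw [← this, hsumfin]
    have hβtot : ∑ a ∈ Finset.range N, β a = ℓ := by
      rw [← hytot, hG, Finset.sum_product]
    have hβ'tot : ∑ b ∈ Finset.range N, β' b = ℓ := by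
      rw [← hytot, hG, Finset.sum_product, Finset.sum_comm]
    have hrowbd : ∑ a ∈ Finset.range N, (a : ℝ) * β a
        ≤ ∑ k ∈ Finset.range N, min ℓ (tailS δ N k) := by
      rw [abel_sum β N]
      refine Finset.sum_le_sum fun k _ => le_min ?_ ?_
      · calc tailS β N k ≤ ∑ a ∈ Finset.range N, β a := by
              refine Finset.sum_le_sum fun a _ => ?_
              split_ifs
              · exact le_rfl
              · exact hβpos a
          _ = ℓ := hβtot
      · refine Finset.sum_le_sum fun a _ => ?_
        split_ifs
        · exact hβle a
        · exact le_rfl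
    have hcolbd : ∑ b ∈ Finset.range N, (b : ℝ) * β' b
        ≤ ∑ k ∈ Finset.range N, min ℓ (tailS δ' N k) := by
      rw [abel_sum β' N]
      refine Finset.sum_le_sum fun k _ => le_min ?_ ?_
      · calc tailS β' N k ≤ ∑ b ∈ Finset.range N, β' b := by
              refine Finset.sum_le_sum fun b _ => ?_
              split_ifs
              · exact le_rfl
              · exact hβ'pos b
          _ = ℓ := hβ'tot
      · refine Finset.sum_le_sum fun b _ => ?_
        split_ifs
        · exact hβ'le b
        · exact le_rfl
    rw [hobj, hsplit, hBdef]
    exact add_le_add hrowbd hcolbd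
  -- Part L : B is at most topBar (addVec z)
  have partL : B ≤ topBar (addVec z) ℓ := by
    set φ := addVec z with hφdef
    have hφpos : ∀ t, 0 ≤ φ t := addVec_nonneg hzpos
    have hTpos : ∀ k, 0 ≤ tailS φ (2 * N) k := tailS_nonneg hφpos (2 * N)
    have hmerge := mergeM (2 * N)
      (fun k => min ℓ (tailS δ N k)) (fun k => min ℓ (tailS δ' N k))
      (fun t => min ℓ (tailS φ (2 * N) t))
      (fun i j hij => min_le_min le_rfl (tailS_anti hδpos N hij))
      (fun i j hij => min_le_min le_rfl (tailS_anti hδ'pos N hij))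
      (fun t => min_le_min le_rfl (tail_le_row N z δ hzpos hz0 hzrow t))
      (fun t => min_le_min le_rfl (tail_le_col N z δ' hzpos hz0 hzcol t))
      (fun a b => by
        have : min (min ℓ (tailS δ N a)) (min ℓ (tailS δ' N b))
            = min ℓ (min (tailS δ N a) (tailS δ' N b)) := by
          rw [min_min_min_comm, min_self]
        rw [this]
        exact min_le_min le_rfl (keymin N z δ δ' hzpos hz0 hzrow hzcol hzm a b))
      N N (by omega)
    have hNN : N + N = 2 * N := by omega
    rw [hNN] at hmerge
    -- greedy solution
    set α : ℕ → ℝ := fun t => min (φ t) (max 0 (ℓ - tailS φ (2 * N) t)) with hαdef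
    have hαpos : ∀ t, 0 ≤ α t := fun t => le_min (hφpos t) (le_max_left 0 _)
    have hαle : ∀ t, α t ≤ φ t := fun t => min_le_left _ _
    have C : ∀ m k, 2 * N ≤ k + m + 1 → tailS α (2 * N) k = min ℓ (tailS φ (2 * N) k) := by
      intro m
      induction m with
      | zero =>
        intro k hk
        rw [tailS_eq_zero (by omega), tailS_eq_zero (f := φ) (by omega), min_eq_right hl0]
      | succ m ih =>
        intro k hk
        by_cases hc : 2 * N ≤ k + m + 1
        · exact ih k hc
        · have hk1 : k + 1 < 2 * N := by omega
          rw [tailS_succ (f := α) hk1, ih (k + 1) (by omega), tailS_succ (f := φ) hk1]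
          exact minRecAux ℓ _ _ (hTpos (k + 1)) (hφpos (k + 1)) hl0
    have hα0 : ∀ t, t ∉ Finset.range (2 * N) → α t = 0 := by
      intro t ht
      rw [Finset.mem_range, not_lt] at ht
      have : φ t = 0 := addVec_eq_zero N z hz0 ht
      exact le_antisymm ((hαle t).trans_eq this) (hαpos t)
    have htot : ∑ t ∈ Finset.range (2 * N), α t = ℓ := by
      rw [range_head (by omega), C (2 * N) 0 (by omega)]
      have harith : α 0 + min ℓ (tailS φ (2 * N) 0) = min ℓ (φ 0 + tailS φ (2 * N) 0) :=
        minRecAux ℓ _ _ (hTpos 0) (hφpos 0) hl0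
      rw [harith, ← range_head (f := φ) (by omega)]
      have hφtot : ∑ t ∈ Finset.range (2 * N), φ t = ∑ a ∈ Finset.range N, δ a := by
        have := fiber_sum N z φ (fun _ => (1 : ℝ)) (fun t _ => grid_fiber N z hz0 t)
        simp only [one_mul] at this
        rw [this, Finset.sum_product]
        exact Finset.sum_congr rfl fun a _ => hzrow a
      rw [hφtot]
      exact min_eq_left hln
    have hobj : ∑ t ∈ Finset.range (2 * N), (t : ℝ) * α t
        = ∑ k ∈ Finset.range (2 * N), min ℓ (tailS φ (2 * N) k) := by
      rw [abel_sum α (2 * N)]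
      exact Finset.sum_congr rfl fun k _ => C (2 * N) k (by omega)
    have hmem : (∑ k ∈ Finset.range (2 * N), min ℓ (tailS φ (2 * N) k))
        ∈ {s : ℝ | ∃ α : ℕ → ℝ, (∀ a, 0 ≤ α a ∧ α a ≤ addVec z a) ∧ (∑' a, α a) = ℓ ∧
          s = ∑' a : ℕ, (a : ℝ) * α a} := by
      refine ⟨α, fun t => ⟨hαpos t, hαle t⟩, ?_, ?_⟩
      · rw [tsum_eq_sum hα0]; exact htot
      · rw [tsum_eq_sum (s := Finset.range (2 * N)) fun t ht => by rw [hα0 t ht, mul_zero]]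
        exact hobj.symm
    have hbdd : BddAbove {s : ℝ | ∃ α : ℕ → ℝ, (∀ a, 0 ≤ α a ∧ α a ≤ addVec z a) ∧
        (∑' a, α a) = ℓ ∧ s = ∑' a : ℕ, (a : ℝ) * α a} := by
      refine ⟨∑ t ∈ Finset.range (2 * N), (t : ℝ) * φ t, ?_⟩
      rintro s ⟨α', hα', -, rfl⟩
      have hα'0 : ∀ t, t ∉ Finset.range (2 * N) → α' t = 0 := by
        intro t ht
        rw [Finset.mem_range, not_lt] at ht
        exact le_antisymm ((hα' t).2.trans_eq (addVec_eq_zero N z hz0 ht)) (hα' t).1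
      rw [tsum_eq_sum (s := Finset.range (2 * N)) fun t ht => by rw [hα'0 t ht, mul_zero]]
      exact Finset.sum_le_sum fun t _ =>
        mul_le_mul_of_nonneg_left (hα' t).2 (Nat.cast_nonneg t)
    calc B ≤ ∑ t ∈ Finset.range (2 * N), min ℓ (tailS φ (2 * N) t) := hmerge
      _ ≤ topBar (addVec z) ℓ := le_csSup hbdd hmem
  calc topBar (addVec z') ℓ ≤ B := Real.sSup_le partU hBnn
    _ ≤ topBar (addVec z) ℓ := partL

/-- The monotone matching of `δ` and `δ'` dominates any other way of adding `δ` and `δ'`: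
if `φ = δ ⊕ δ'` and `φ'` is obtained by an arbitrary matching, then `φ' ⪯ φ`. -/
theorem stmt6 (n : ℕ) (δ δ' : ℕ → ℝ) (hδ : memS n δ) (hδ' : memS n δ')
    (z z' : ℕ → ℕ → ℝ)
    (hz : IsMatching z δ δ') (hzm : MonotoneMatching z)
    (hz' : IsMatching z' δ δ') :
    ∀ ℓ : ℝ, 0 ≤ ℓ → ℓ ≤ n → topBar (addVec z') ℓ ≤ topBar (addVec z) ℓ := by
  intro ℓ hl0 hln
  rcases hl0.eq_or_lt with h0 | hlpos
  · rw [← h0, topBar_zero _ (addVec_nonneg (fun a b => hz'.1 a b)),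
      topBar_zero _ (addVec_nonneg (fun a b => hz.1 a b))]
  · -- choose a common support bound N
    set F := hδ.2.1.toFinset ∪ hδ'.2.1.toFinset with hF
    set N := F.sup id + 1 with hNdef
    have hNpos : 0 < N := Nat.succ_pos _
    have hNδ : ∀ a, N ≤ a → δ a = 0 := by
      intro a ha
      by_contra hne
      have hmem : a ∈ F := by
        rw [hF, Finset.mem_union]
        exact Or.inl (hδ.2.1.mem_toFinset.mpr hne)
      have := Finset.le_sup (f := id) hmem
      simp only [id_eq] at this
      omega
    have hNδ' : ∀ a, N ≤ a → δ' a = 0 := by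
      intro a ha
      by_contra hne
      have hmem : a ∈ F := by
        rw [hF, Finset.mem_union]
        exact Or.inr (hδ'.2.1.mem_toFinset.mpr hne)
      have := Finset.le_sup (f := id) hmem
      simp only [id_eq] at this
      omega
    -- the monotone matching z is "honest": all rows and columns are summable
    have hrs : ∀ a, Summable (fun b => z a b) := fun a =>
      rows_summable z δ δ' hz hzm hδ'.2.1 a
    have hcs : ∀ b, Summable (fun a => z a b) := fun b =>
      rows_summable (fun a b => z b a) δ' δ (transpose_matching hz) (transpose_mono hzm)
        hδ.2.1 b
    have hzle : ∀ a b, z a b ≤ δ a := fun a b =>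
      (hz.2.1 a) ▸ Summable.le_tsum (hrs a) b fun j _ => hz.1 a j
    have hzle' : ∀ a b, z a b ≤ δ' b := fun a b =>
      (hz.2.2 b) ▸ Summable.le_tsum (hcs b) a fun j _ => hz.1 j b
    have hz0 : ∀ a b, N ≤ a ∨ N ≤ b → z a b = 0 := by
      rintro a b (h | h)
      · exact le_antisymm ((hzle a b).trans_eq (hNδ a h)) (hz.1 a b)
      · exact le_antisymm ((hzle' a b).trans_eq (hNδ' b h)) (hz.1 a b)
    have hzrow : ∀ a, ∑ b ∈ Finset.range N, z a b = δ a := by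
      intro a
      rw [← tsum_eq_sum (L := SummationFilter.unconditional ℕ) (fun b hb => hz0 a b (Or.inr (by
        rw [Finset.mem_range, not_lt] at hb; exact hb)))]
      exact hz.2.1 a
    have hzcol : ∀ b, ∑ a ∈ Finset.range N, z a b = δ' b := by
      intro b
      rw [← tsum_eq_sum (L := SummationFilter.unconditional ℕ) (fun a ha => hz0 a b (Or.inl (by
        rw [Finset.mem_range, not_lt] at ha; exact ha)))]
      exact hz.2.2 b
    have hnsum : ∑ a ∈ Finset.range N, δ a = (n : ℝ) := by
      rw [← tsum_eq_sum (L := SummationFilter.unconditional ℕ) (fun a ha => hNδ a (by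
        rw [Finset.mem_range, not_lt] at ha; exact ha))]
      exact hδ.2.2
    have hln' : ℓ ≤ ∑ a ∈ Finset.range N, δ a := hnsum ▸ hln
    by_cases hsb : (∀ a, Summable (fun b => z' a b)) ∧ (∀ b, Summable (fun a => z' a b))
    · -- z' is honest as well
      have hz'le : ∀ a b, z' a b ≤ δ a := fun a b =>
        (hz'.2.1 a) ▸ Summable.le_tsum (hsb.1 a) b fun j _ => hz'.1 a j
      have hz'le' : ∀ a b, z' a b ≤ δ' b := fun a b =>
        (hz'.2.2 b) ▸ Summable.le_tsum (hsb.2 b) a fun j _ => hz'.1 j b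
      have hz'0 : ∀ a b, N ≤ a ∨ N ≤ b → z' a b = 0 := by
        rintro a b (h | h)
        · exact le_antisymm ((hz'le a b).trans_eq (hNδ a h)) (hz'.1 a b)
        · exact le_antisymm ((hz'le' a b).trans_eq (hNδ' b h)) (hz'.1 a b)
      have hz'row : ∀ a, ∑ b ∈ Finset.range N, z' a b = δ a := by
        intro a
        rw [← tsum_eq_sum (L := SummationFilter.unconditional ℕ) (fun b hb => hz'0 a b (Or.inr (by
          rw [Finset.mem_range, not_lt] at hb; exact hb)))]
        exact hz'.2.1 a
      have hz'col : ∀ b, ∑ a ∈ Finset.range N, z' a b = δ' b := by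
        intro b
        rw [← tsum_eq_sum (L := SummationFilter.unconditional ℕ) (fun a ha => hz'0 a b (Or.inl (by
          rw [Finset.mem_range, not_lt] at ha; exact ha)))]
        exact hz'.2.2 b
      exact mainLemma N hNpos δ δ' z z' (hz.1) hz0 hzrow hzcol hzm
        (hz'.1) hz'0 hz'row hz'col ℓ hl0 hln'
    · -- z' has a non-summable row or column: the feasible set for addVec z' is unbounded,
      -- hence its sSup is 0
      rw [not_and_or] at hsb
      have hub : ¬ BddAbove {s : ℝ | ∃ α : ℕ → ℝ, (∀ a, 0 ≤ α a ∧ α a ≤ addVec z' a) ∧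
          (∑' a, α a) = ℓ ∧ s = ∑' a : ℕ, (a : ℝ) * α a} := by
        rcases hsb with h | h
        · push_neg at h
          obtain ⟨a₀, ha₀⟩ := h
          exact unbdd z' (fun a b => hz'.1 a b) a₀ ha₀ ℓ hlpos
        · push_neg at h
          obtain ⟨b₀, hb₀⟩ := h
          have := unbdd (fun a b => z' b a) (fun a b => hz'.1 b a) b₀ hb₀ ℓ hlpos
          rwa [addVec_swap] at this
      have : topBar (addVec z') ℓ = 0 := Real.sSup_of_not_bddAbove hub
      rw [this]
      exact topBar_nonneg _ _
end

section
/- Let (F ∪ C, d) be a metric space, 0 < ε < 1/10. For a client c ∈ C and nonempty X ⊆ F, say c is X-exclusive if (i) for all f1, f2 ∈ X, d(f1,f2) ≤ ε·d(c,X), and (ii) for all f ∈ F∖X, max_{f'∈X} d(c,f') ≤ ε·d(c,f). Then the family {X ⊆ F : some client is X-exclusive} is laminar: if X ∩ Y ≠ ∅ for two members X, Y of the family, then X ⊆ Y or Y ⊆ X. -/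
/-!
Let `z ∈ X ∩ Y`, with `X` exclusive for `c` and `Y` exclusive for `c'`, and suppose `y ∈ Y \ X`
and `x ∈ X \ Y`. Since `y ∉ X`, the client `c` is `ε`-close to `z` relative to `d(c, y)`, while
`y` is `ε d(c', z)`-close to `z`; hence `d(c, z) ≤ ε d(c, z) + ε² d(c', z)`, and symmetrically
through `x`. Adding the two bounds gives `(1 - ε - ε²)(d(c, z) + d(c', z)) ≤ 0`, so `c' = z`
and then `d(y, z) ≤ ε d(c', z) = 0` puts `y = z` in `X`.
-/

/-- A client `c` is `X`-exclusive (w.r.t. facility set `F` and parameter `ε`):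
`X` is a nonempty subset of `F`, (i) `d(f₁,f₂) ≤ ε·d(c,X)` for all `f₁,f₂ ∈ X`
(equivalently `d(f₁,f₂) ≤ ε·d(c,f)` for every `f ∈ X`), and
(ii) `max_{f'∈X} d(c,f') ≤ ε·d(c,f)` for every `f ∈ F \ X`. -/
def Exclusive {V : Type*} [MetricSpace V] (ε : ℝ) (F : Finset V) (c : V)
    (X : Finset V) : Prop :=
  X ⊆ F ∧ X.Nonempty ∧
  (∀ f1 ∈ X, ∀ f2 ∈ X, ∀ f ∈ X, dist f1 f2 ≤ ε * dist c f) ∧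
  (∀ f ∈ F, f ∉ X → ∀ f' ∈ X, dist c f' ≤ ε * dist c f)

theorem eq_zero_of_le_mul_add_sq_mul {ε a b : ℝ} (hε : ε + ε ^ 2 < 1) (ha : 0 ≤ a)
    (hb : 0 ≤ b) (hab : a ≤ ε * a + ε ^ 2 * b) (hba : b ≤ ε * b + ε ^ 2 * a) : b = 0 := by
  have hsum : a + b ≤ (ε + ε ^ 2) * (a + b) := by linarith
  nlinarith

namespace Exclusive

variable {V : Type*} [MetricSpace V] {ε : ℝ} {F X Y : Finset V} {c c' x y z : V}

theorem dist_le_mul_dist (h : Exclusive ε F c X) (hx : x ∈ X) (hz : z ∈ X) :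
    dist x z ≤ ε * dist c z :=
  h.2.2.1 x hx z hz z hz

theorem dist_le_mul_dist_of_notMem (h : Exclusive ε F c X) (hz : z ∈ X) (hy : y ∈ F)
    (hyX : y ∉ X) : dist c z ≤ ε * dist c y :=
  h.2.2.2 y hy hyX z hz

theorem dist_le_mul_add_sq_mul (hε : 0 ≤ ε) (hX : Exclusive ε F c X)
    (hY : Exclusive ε F c' Y) (hzX : z ∈ X) (hzY : z ∈ Y) (hyY : y ∈ Y) (hyX : y ∉ X) :
    dist c z ≤ ε * dist c z + ε ^ 2 * dist c' z :=
  calc dist c z ≤ ε * dist c y := hX.dist_le_mul_dist_of_notMem hzX (hY.1 hyY) hyX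
    _ ≤ ε * (dist c z + dist y z) := by
      gcongr
      exact dist_triangle_right c y z
    _ ≤ ε * (dist c z + ε * dist c' z) := by
      gcongr
      exact hY.dist_le_mul_dist hyY hzY
    _ = ε * dist c z + ε ^ 2 * dist c' z := by ring

end Exclusive

/-- The family `{X ⊆ F : some client is X-exclusive}` is laminar. -/
theorem stmt7 {V : Type*} [MetricSpace V] [DecidableEq V] (F C : Finset V) (ε : ℝ)
    (hε0 : 0 < ε) (hε1 : ε < 1 / 10)
    (X Y : Finset V)
    (hX : ∃ c ∈ C, Exclusive ε F c X) (hY : ∃ c ∈ C, Exclusive ε F c Y)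
    (hXY : (X ∩ Y).Nonempty) :
    X ⊆ Y ∨ Y ⊆ X := by
  obtain ⟨c, -, hc⟩ := hX
  obtain ⟨c', -, hc'⟩ := hY
  obtain ⟨z, hz⟩ := hXY
  obtain ⟨hzX, hzY⟩ := Finset.mem_inter.mp hz
  refine or_iff_not_imp_left.mpr fun hXY' y hyY => ?_
  obtain ⟨x, hxX, hxY⟩ := Finset.not_subset.mp hXY'
  by_contra hyX
  have hε : ε + ε ^ 2 < 1 := by nlinarith
  have hc'z : dist c' z = 0 :=
    eq_zero_of_le_mul_add_sq_mul hε dist_nonneg dist_nonneg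
      (hc.dist_le_mul_add_sq_mul hε0.le hc' hzX hzY hyY hyX)
      (hc'.dist_le_mul_add_sq_mul hε0.le hc hzY hzX hxX hxY)
  have hyz : dist y z ≤ 0 := by simpa [hc'z] using hc'.dist_le_mul_dist hyY hzY
  exact hyX (dist_le_zero.mp hyz ▸ hzX)
end

section
/- Let (F ∪ C, d) be a metric space and 0 < ε < 1/10. If X, Y are nonempty subsets of F and there is a client c that is both X-exclusive and Y-exclusive, then X = Y. -/
namespace Exclusive

variable {V : Type*} [MetricSpace V] {ε : ℝ} {F : Finset V} {c : V} {X Y : Finset V}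

/-- A facility `f ∈ X \ Y` and a facility `g ∈ Y` would both have to coincide with `c`:
if `g ∈ X`, the triangle inequality gives `d(c,f) ≤ 2ε·d(c,f)`; otherwise the two separation
conditions give `d(c,f) + d(c,g) ≤ ε·(d(c,f) + d(c,g))`. -/
theorem subset (hε : ε < 1 / 2) (hX : Exclusive ε F c X) (hY : Exclusive ε F c Y) :
    X ⊆ Y := by
  obtain ⟨hXF, -, hXdiam, hXsep⟩ := hX
  obtain ⟨hYF, ⟨g, hgY⟩, -, hYsep⟩ := hY
  intro f hfX
  by_contra hfY
  have hg : dist c g ≤ ε * dist c f := hYsep f (hXF hfX) hfY g hgY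
  have hf : dist c f = 0 := by
    by_cases hgX : g ∈ X
    · have hgf : dist g f ≤ ε * dist c f := hXdiam g hgX f hfX f hfX
      nlinarith [dist_triangle c g f, dist_nonneg (x := c) (y := f)]
    · have hf' : dist c f ≤ ε * dist c g := hXsep g (hYF hgY) hgX f hfX
      nlinarith [dist_nonneg (x := c) (y := f), dist_nonneg (x := c) (y := g)]
  have hcg : c = g := dist_le_zero.mp (by simpa [hf] using hg)
  exact hfY ((dist_eq_zero.mp hf).symm.trans hcg ▸ hgY)

end Exclusive

theorem stmt8_general {V : Type*} [MetricSpace V] (F : Finset V) (ε : ℝ)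
    (hε1 : ε < 1 / 10)
    (c : V) (X Y : Finset V)
    (hX : Exclusive ε F c X) (hY : Exclusive ε F c Y) :
    X = Y := by
  have hε : ε < 1 / 2 := by linarith
  exact (hX.subset hε hY).antisymm (hY.subset hε hX)

/-- If a client is both `X`-exclusive and `Y`-exclusive, then `X = Y`. -/
theorem stmt8 {V : Type*} [MetricSpace V] (F : Finset V) (ε : ℝ)
    (hε0 : 0 < ε) (hε1 : ε < 1 / 10)
    (c : V) (X Y : Finset V)
    (hX : Exclusive ε F c X) (hY : Exclusive ε F c Y) :
    X = Y :=
  stmt8_general F ε hε1 c X Y hX hY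
end

section
/- Let j' be a client, J' a finite set of clients containing j' with |J'| ≥ 1, and suppose b^t: J' → R_{≥0} is such that b^t_{j'} is among the ⌈|J'|/2⌉ smallest values of b^t over J'. Then for any t ≥ 0, (b^t_{j'} − t)^+ ≤ (2/|J'|) · ∑_{j ∈ J'} (b^t_j − t)^+. -/
open Finset

/-
At least half of `J'` has `b j ≥ b j'`, and on those clients `(b j - t)⁺ ≥ (b j' - t)⁺`.
Summing over that half alone already gives `(|J'| / 2) · (b j' - t)⁺ ≤ ∑ j ∈ J', (b j - t)⁺`.
-/

lemma Finset.card_mul_le_two_mul_sum_of_half_le {ι : Type*} {s : Finset ι} {f : ι → ℝ} {a : ℝ}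
    (hf : ∀ j ∈ s, 0 ≤ f j) (ha : 0 ≤ a) (hhalf : #s ≤ 2 * #{j ∈ s | a ≤ f j}) :
    #s * a ≤ 2 * ∑ j ∈ s, f j := by
  have hbig : (#{j ∈ s | a ≤ f j} : ℝ) * a ≤ ∑ j ∈ s with a ≤ f j, f j := by
    simpa using card_nsmul_le_sum _ f a fun j hj => (mem_filter.mp hj).2
  have hsub : ∑ j ∈ s with a ≤ f j, f j ≤ ∑ j ∈ s, f j :=
    sum_le_sum_of_subset_of_nonneg (filter_subset _ _) fun j hj _ => hf j hj
  have hcard : (#s : ℝ) ≤ 2 * #{j ∈ s | a ≤ f j} := by exact_mod_cast hhalf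
  calc (#s : ℝ) * a ≤ 2 * #{j ∈ s | a ≤ f j} * a := mul_le_mul_of_nonneg_right hcard ha
    _ ≤ 2 * ∑ j ∈ s, f j := by rw [mul_assoc]; linarith

lemma Finset.card_le_two_mul_card_filter_not {ι : Type*} {s : Finset ι} {p : ι → Prop}
    [DecidablePred p] (h : #{j ∈ s | p j} < (#s + 1) / 2) : #s ≤ 2 * #{j ∈ s | ¬ p j} := by
  have := card_filter_add_card_filter_not (s := s) fun j => p j
  omega

theorem stmt11_general {ι : Type*} (J' : Finset ι)
    (j' : ι) (b : ι → ℝ)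
    (hhalf : (J'.filter fun j => b j < b j').card < (J'.card + 1) / 2)
    (t : ℝ) :
    max (b j' - t) 0 ≤ (2 / (J'.card : ℝ)) * ∑ j ∈ J', max (b j - t) 0 := by
  have hpos : (0 : ℝ) < #J' := Nat.cast_pos.mpr (by omega)
  have hhalf_above : #J' ≤ 2 * #{j ∈ J' | max (b j' - t) 0 ≤ max (b j - t) 0} := by
    refine (card_le_two_mul_card_filter_not hhalf).trans (Nat.mul_le_mul_left 2 (card_le_card ?_))
    refine monotone_filter_right _ fun j _ hj => ?_
    exact max_le_max_right 0 (sub_le_sub_right (not_lt.mp hj) t)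
  have hsum := card_mul_le_two_mul_sum_of_half_le (fun j _ => le_max_right (b j - t) 0)
    (le_max_right _ _) hhalf_above
  rw [div_mul_eq_mul_div, le_div_iff₀ hpos]
  linarith

/-- If `j' ∈ J'` is among the `⌈|J'|/2⌉` smallest values of `b` over `J'`
(i.e. fewer than `⌈|J'|/2⌉` elements of `J'` have a strictly smaller `b`-value), then
`(b_{j'} − t)⁺ ≤ (2/|J'|) · ∑_{j ∈ J'} (b_j − t)⁺` for every `t ≥ 0`. -/
theorem stmt11 {ι : Type*} (J' : Finset ι) (hJ' : J'.Nonempty)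
    (j' : ι) (hj' : j' ∈ J') (b : ι → ℝ) (hb : ∀ j, 0 ≤ b j)
    (hhalf : (J'.filter fun j => b j < b j').card < (J'.card + 1) / 2)
    (t : ℝ) (ht : 0 ≤ t) :
    max (b j' - t) 0 ≤ (2 / (J'.card : ℝ)) * ∑ j ∈ J', max (b j - t) 0 :=
  stmt11_general J' j' b hhalf t
end

section
/- Let (i*, J) be a cluster in a metric space, J' ⊆ J its core (the points of J closest to i*), S a set of facilities, and suppose ∑_{j∈J'} d(j,S) ≤ ε·∑_{j∈J'} d(i*,j) for ε ∈ (0,1). Let p ∈ S be the facility closest to i*. Then d(i*, p) ≤ (1+ε)·d̄ where d̄ = (1/|J|)∑_{j∈J} d(i*,j). -/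
open Finset

/- The nearest facility `p` is, by the triangle inequality, within `d(i*, j) + d(j, S)` of `i*`
for every client `j`; averaging over the core gives `|J'|·d(i*, p) ≤ (1 + ε)·∑_{J'} d(i*, j)`.
The core consists of the clients closest to `i*`, so its average distance is at most that of `J`. -/

theorem Finset.card_mul_sum_le_card_mul_sum_of_subset {α : Type*} {s t : Finset α}
    (f : α → ℝ) (hts : t ⊆ s)
    (hle : ∀ a ∈ t, ∀ b ∈ s, b ∉ t → f a ≤ f b) :
    (s.card : ℝ) * ∑ a ∈ t, f a ≤ t.card * ∑ a ∈ s, f a := by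
  classical
  have hcross : ((s \ t).card : ℝ) * ∑ a ∈ t, f a ≤ t.card * ∑ b ∈ s \ t, f b := by
    calc ((s \ t).card : ℝ) * ∑ a ∈ t, f a = ∑ _b ∈ s \ t, ∑ a ∈ t, f a := by
          rw [sum_const, nsmul_eq_mul]
      _ ≤ ∑ b ∈ s \ t, ∑ _a ∈ t, f b := by
          refine sum_le_sum fun b hb => sum_le_sum fun a ha => ?_
          obtain ⟨hbs, hbt⟩ := mem_sdiff.mp hb
          exact hle a ha b hbs hbt
      _ = t.card * ∑ b ∈ s \ t, f b := by
          simp only [sum_const, nsmul_eq_mul, mul_sum]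
  have hcard : ((s \ t).card : ℝ) + t.card = s.card := by
    exact_mod_cast card_sdiff_add_card_eq_card hts
  have hsum : ∑ b ∈ s \ t, f b + ∑ a ∈ t, f a = ∑ a ∈ s, f a := sum_sdiff hts
  rw [← hcard, ← hsum]
  linarith

theorem Finset.card_mul_dist_le_sum_dist_add_sum_inf'_dist {V : Type*} [PseudoMetricSpace V]
    (x p : V) (S : Finset V) (hS : S.Nonempty) (hpmin : ∀ q ∈ S, dist x p ≤ dist x q)
    (T : Finset V) :
    (T.card : ℝ) * dist x p ≤ ∑ j ∈ T, dist x j + ∑ j ∈ T, S.inf' hS fun i => dist j i := by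
  rw [← sum_add_distrib, ← nsmul_eq_mul, ← sum_const]
  refine sum_le_sum fun j _ => ?_
  obtain ⟨q, hq, hqj⟩ := S.exists_mem_eq_inf' hS fun i => dist j i
  calc dist x p ≤ dist x q := hpmin q hq
    _ ≤ dist x j + dist j q := dist_triangle x j q
    _ = dist x j + S.inf' hS fun i => dist j i := by rw [hqj]

theorem stmt13_general {V : Type*} [MetricSpace V] (istar : V) (J J' S : Finset V)
    (hJ : J.Nonempty) (hS : S.Nonempty) (ε : ℝ) (hε0 : 0 < ε)
    (hsub : J' ⊆ J) (hcard : J'.card = ⌈ε * (J.card : ℝ)⌉₊)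
    (hcore : ∀ j ∈ J', ∀ j'' ∈ J, j'' ∉ J' → dist istar j ≤ dist istar j'')
    (hclose : (∑ j ∈ J', S.inf' hS fun i => dist j i) ≤ ε * ∑ j ∈ J', dist istar j)
    (p : V) (hpmin : ∀ q ∈ S, dist istar p ≤ dist istar q) :
    dist istar p ≤ (1 + ε) * ((∑ j ∈ J, dist istar j) / (J.card : ℝ)) := by
  have hJpos : (0 : ℝ) < J.card := by exact_mod_cast card_pos.mpr hJ
  have hJ'pos : (0 : ℝ) < J'.card := by
    rw [hcard, Nat.cast_pos, Nat.ceil_pos]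
    positivity
  have hnearest : (J'.card : ℝ) * dist istar p ≤ (1 + ε) * ∑ j ∈ J', dist istar j := by
    linarith [card_mul_dist_le_sum_dist_add_sum_inf'_dist istar p S hS hpmin J']
  have haverage := card_mul_sum_le_card_mul_sum_of_subset (dist istar) hsub hcore
  rw [mul_div_assoc', le_div_iff₀ hJpos, ← mul_le_mul_iff_right₀ hJ'pos]
  calc (J'.card : ℝ) * (dist istar p * J.card)
      = J.card * (J'.card * dist istar p) := by ring
    _ ≤ J.card * ((1 + ε) * ∑ j ∈ J', dist istar j) := by gcongr
    _ = (1 + ε) * (J.card * ∑ j ∈ J', dist istar j) := by ring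
    _ ≤ (1 + ε) * (J'.card * ∑ j ∈ J, dist istar j) := by gcongr
    _ = J'.card * ((1 + ε) * ∑ j ∈ J, dist istar j) := by ring

/-- For a cluster `(i*, J)` with core `J'` (the `⌈ε|J|⌉` points of `J` closest to `i*`),
if `∑_{j∈J'} d(j,S) ≤ ε·∑_{j∈J'} d(i*,j)`, then the facility `p ∈ S` closest to `i*`
satisfies `d(i*, p) ≤ (1+ε)·d̄`, where `d̄ = (1/|J|)∑_{j∈J} d(i*,j)`. -/
theorem stmt13 {V : Type*} [MetricSpace V] (istar : V) (J J' S : Finset V)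
    (hJ : J.Nonempty) (hS : S.Nonempty) (ε : ℝ) (hε0 : 0 < ε) (hε1 : ε < 1)
    (hsub : J' ⊆ J) (hcard : J'.card = ⌈ε * (J.card : ℝ)⌉₊)
    (hcore : ∀ j ∈ J', ∀ j'' ∈ J, j'' ∉ J' → dist istar j ≤ dist istar j'')
    (hclose : (∑ j ∈ J', S.inf' hS fun i => dist j i) ≤ ε * ∑ j ∈ J', dist istar j)
    (p : V) (hp : p ∈ S) (hpmin : ∀ q ∈ S, dist istar p ≤ dist istar q) :
    dist istar p ≤ (1 + ε) * ((∑ j ∈ J, dist istar j) / (J.card : ℝ)) :=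
  stmt13_general istar J J' S hJ hS ε hε0 hsub hcard hcore hclose p hpmin
end
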